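/- Any two unrooted binary phylogenetic trees T and S on the same leaf set of size n, where T is a caterpillar, have an agreement subtree of size at least (1/3)·log2 n. -/

import Mathlib

/-- Rooted binary trees with leaves labeled by `X` (with designated left/right children). -/
inductive BTree (X : Type) where
  | leaf : X → BTree X
  | node : BTree X → BTree X → BTree X

namespace BTree

variable {X : Type} [DecidableEq X]

/-- Left-to-right (pre-order) leaf sequence. -/
def seq : BTree X → List X
  | leaf x => [x]
  | node l r => seq l ++ seq r

/-- Leaf set. -/
def leaves (t : BTree X) : Finset X := t.seq.toFinset

/-- Number of leaves. -/
def size (t : BTree X) : ℕ := t.seq.length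

/-- A phylogenetic tree: leaves are bijectively labeled (no repeated labels). -/
def Phylo (t : BTree X) : Prop := t.seq.Nodup

def isLeaf : BTree X → Prop
  | leaf _ => True
  | node _ _ => False

/-- A rooted caterpillar: every internal node (including the root) has a leaf child. -/
def isCaterpillar : BTree X → Prop
  | leaf _ => True
  | node l r => (isLeaf l ∧ isCaterpillar r) ∨ (isLeaf r ∧ isCaterpillar l)

/-- A perfectly balanced binary tree. -/
def isPerfect : BTree X → Prop
  | leaf _ => True
  | node l r => isPerfect l ∧ isPerfect r ∧ size l = size r

/-- Restriction `T|A`: minimal subtree spanning the leaves in `A`, with degree-two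
vertices suppressed; `none` if `A` contains no leaf of the tree. -/
def restrict : BTree X → Finset X → Option (BTree X)
  | leaf x, A => if x ∈ A then some (leaf x) else none
  | node l r, A =>
    match restrict l A, restrict r A with
    | some l', some r' => some (node l' r')
    | some l', none => some l'
    | none, some r' => some r'
    | none, none => none

/-- Nodes of a tree are addressed by root-paths: `false` = go left, `true` = go right.
`subtreeAt t p` is the subtree rooted at the node with address `p` (if it exists). -/
def subtreeAt : BTree X → List Bool → Option (BTree X)
  | t, [] => some t
  | leaf _, _ :: _ => none
  | node l _, false :: p => subtreeAt l p
  | node _ r, true :: p => subtreeAt r p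

/-- Address of the least common ancestor of a set of leaves. -/
def lcaPos : BTree X → Finset X → List Bool
  | leaf _, _ => []
  | node l r, A =>
    if A ⊆ l.leaves then false :: lcaPos l A
    else if A ⊆ r.leaves then true :: lcaPos r A
    else []

/-- `v ⪯ u` in the ancestor order iff the address of `u` is a prefix of the address of `v`.
Two nodes are incomparable if neither address is a prefix of the other. -/
def Incomp (p q : List Bool) : Prop := ¬ p <+: q ∧ ¬ q <+: p

/-- `StrictBelow p q`: the node at address `p` is a strict descendant of the node at `q`. -/
def StrictBelow (p q : List Bool) : Prop := q <+: p ∧ p ≠ q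

/-- Identity of rooted phylogenetic trees: label-preserving graph isomorphism
(the left/right designation is irrelevant). -/
def REq : BTree X → BTree X → Prop
  | leaf x, leaf y => x = y
  | node l r, node l' r' => (REq l l' ∧ REq r r') ∨ (REq l r' ∧ REq r l')
  | _, _ => False

/-- The splits (edge-induced leaf bipartitions, each recorded by both of its sides)
of the unrooted tree obtained by de-rooting `t`. -/
def usplits (t : BTree X) : Set (Finset X) :=
  { A | ∃ p u, t.subtreeAt p = some u ∧ (A = u.leaves ∨ A = t.leaves \ u.leaves) }

/-- `t` and `s` de-root to identical unrooted phylogenetic trees. -/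
def UEq (t s : BTree X) : Prop := t.leaves = s.leaves ∧ usplits t = usplits s

/-- Rooted agreement of `t` and `s` on leaf set `A`: `t|A = s|A` as rooted trees. -/
def RAgree (t s : BTree X) (A : Finset X) : Prop :=
  ∃ t' s', t.restrict A = some t' ∧ s.restrict A = some s' ∧ REq t' s'

/-- Unrooted agreement of (the de-rootings of) `t` and `s` on leaf set `A`. -/
def UAgree (t s : BTree X) (A : Finset X) : Prop :=
  ∃ t' s', t.restrict A = some t' ∧ s.restrict A = some s' ∧ UEq t' s'

/-- `t` de-roots to an unrooted caterpillar. -/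
def UCaterpillar (t : BTree X) : Prop := ∃ c : BTree X, isCaterpillar c ∧ UEq c t

/-- The subtrees hanging off the path from the left-most leaf to the root
(`Q_1, …, Q_k` in the paper; `Q_1` is the left-most leaf itself). -/
def leftSpine : BTree X → List (BTree X)
  | leaf x => [leaf x]
  | node l r => leftSpine l ++ [r]

/-- The subtrees hanging off the path from the root to the right-most leaf
(`R_1, …, R_m` in the paper; `R_m` is the right-most leaf itself). -/
def rightSpine : BTree X → List (BTree X)
  | leaf x => [leaf x]
  | node l r => l :: rightSpine r

/-- Graph distance (number of edges) between leaves `x` and `y` in the unrooted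
tree obtained by de-rooting `t` (the suppressed root accounts for the `-1`). -/
def udist (t : BTree X) (x y : X) : ℕ :=
  (lcaPos t {x}).length - (lcaPos t {x, y}).length +
    ((lcaPos t {y}).length - (lcaPos t {x, y}).length) -
    (if lcaPos t {x, y} = [] then 1 else 0)

end BTree

/-!
Let `L` be the leaf order along the spine of the caterpillar `t`. If `s` displays a leaf set
`M` as a caterpillar whose spine order is monotone along `L`, then `t|M` and `s|M` are
caterpillars with the same spine order up to reversal, hence the same unrooted tree.

Monotone combs are found by recursion down `s`: for a leaf set `B` one builds simultaneously an
increasing comb `I` and a decreasing comb `D` inside `B` with `|I| + |D| ≥ 2 + (2/3) log₂ |B|`.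
At a node whose leaves in `B` split as `P ∪ Q` with `|P| ≤ |Q|`, either `P` is tiny, and a leaf
`a ∈ P` cuts `Q` into the leaves below and above `a`, the larger part extending by `a`; or an
extreme of `B` lies in `P` and extends a comb of `Q`; or both extremes lie in `Q` and extend
both combs of `P`.
-/

namespace List

variable {X : Type} [DecidableEq X]

theorem toFinset_filter_mem (L : List X) (A : Finset X) :
    (L.filter (· ∈ A)).toFinset = L.toFinset ∩ A := by
  rw [toFinset_filter]
  simp only [decide_eq_true_eq]
  exact Finset.filter_mem_eq_inter

theorem filter_mem_toFinset_eq_of_pairwise_idxOf {L M : List X} (hL : L.Nodup)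
    (hML : ∀ x ∈ M, x ∈ L) (hM : M.Pairwise (fun a b => L.idxOf a < L.idxOf b)) :
    L.filter (· ∈ M.toFinset) = M := by
  have hLs : L.Pairwise (fun a b => L.idxOf a < L.idxOf b) := by
    rw [pairwise_iff_getElem]
    intro i j hi hj hij
    rwa [hL.idxOf_getElem, hL.idxOf_getElem]
  have hMnd : M.Nodup := hM.imp fun h => by rintro rfl; exact lt_irrefl _ h
  refine Perm.eq_of_pairwise (fun _ _ _ _ h₁ h₂ => absurd (h₁.trans h₂) (lt_irrefl _))
    (hLs.sublist filter_sublist) hM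
    (perm_of_nodup_nodup_toFinset_eq (hL.filter _) hMnd ?_)
  rw [toFinset_filter_mem, Finset.inter_eq_right]
  exact fun x hx => mem_toFinset.2 (hML x (mem_toFinset.1 hx))

end List

namespace BTree

variable {X : Type}

theorem Phylo.left {l r : BTree X} (h : (node l r).Phylo) : l.Phylo :=
  (List.nodup_append.1 h).1

theorem Phylo.right {l r : BTree X} (h : (node l r).Phylo) : r.Phylo :=
  (List.nodup_append.1 h).2.1

variable [DecidableEq X]

@[simp] theorem leaves_leaf (x : X) : (leaf x).leaves = {x} := by
  simp [leaves, seq]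

@[simp] theorem leaves_node (l r : BTree X) : (node l r).leaves = l.leaves ∪ r.leaves := by
  simp [leaves, seq]

theorem leaves_nonempty (t : BTree X) : t.leaves.Nonempty := by
  induction t with
  | leaf x => simp
  | node l r ihl _ => simpa using Or.inl ihl

theorem Phylo.disjoint {l r : BTree X} (h : (node l r).Phylo) : Disjoint l.leaves r.leaves :=
  List.disjoint_toFinset_iff_disjoint.2 (List.disjoint_of_nodup_append h)

theorem restrict_congr {t : BTree X} {A B : Finset X}
    (h : ∀ x ∈ t.leaves, x ∈ A ↔ x ∈ B) : t.restrict A = t.restrict B := by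
  induction t with
  | leaf x => simp [restrict, h x (by simp)]
  | node l r ihl ihr =>
    simp only [leaves_node, Finset.mem_union] at h
    simp only [restrict, ihl fun x hx => h x (Or.inl hx), ihr fun x hx => h x (Or.inr hx)]

theorem restrict_eq_none_iff {t : BTree X} {A : Finset X} :
    t.restrict A = none ↔ Disjoint t.leaves A := by
  induction t with
  | leaf x => by_cases hx : x ∈ A <;> simp [restrict, hx]
  | node l r ihl ihr =>
    rw [leaves_node, Finset.disjoint_union_left, ← ihl, ← ihr]
    rcases hl : l.restrict A with _ | l' <;> rcases hr : r.restrict A with _ | r' <;>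
      simp [restrict, hl, hr]

theorem exists_restrict_eq_some {t : BTree X} {A : Finset X} (h : ¬ Disjoint t.leaves A) :
    ∃ t', t.restrict A = some t' :=
  Option.ne_none_iff_exists'.1 (mt restrict_eq_none_iff.1 h)

theorem leaves_of_restrict_eq_some {t t' : BTree X} {A : Finset X}
    (h : t.restrict A = some t') : t'.leaves = t.leaves ∩ A := by
  induction t generalizing t' with
  | leaf x =>
    by_cases hx : x ∈ A <;> simp only [restrict, hx, if_true, if_false, reduceCtorEq,
      Option.some.injEq] at h
    subst h
    simp [hx]
  | node l r ihl ihr =>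
    rw [leaves_node, Finset.union_inter_distrib_right]
    rcases hl : l.restrict A with _ | l' <;> rcases hr : r.restrict A with _ | r' <;>
      simp only [restrict, hl, hr, reduceCtorEq, Option.some.injEq] at h <;> subst h
    · rw [Finset.disjoint_iff_inter_eq_empty.1 (restrict_eq_none_iff.1 hl), ihr hr,
        Finset.empty_union]
    · rw [Finset.disjoint_iff_inter_eq_empty.1 (restrict_eq_none_iff.1 hr), ihl hl,
        Finset.union_empty]
    · rw [leaves_node, ihl hl, ihr hr]

theorem restrict_node_of_disjoint_right {l r : BTree X} {A : Finset X}
    (h : Disjoint r.leaves A) : (node l r).restrict A = l.restrict A := by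
  rw [restrict, restrict_eq_none_iff.2 h]
  rcases l.restrict A <;> rfl

theorem restrict_node_of_disjoint_left {l r : BTree X} {A : Finset X}
    (h : Disjoint l.leaves A) : (node l r).restrict A = r.restrict A := by
  rw [restrict, restrict_eq_none_iff.2 h]
  rcases r.restrict A <;> rfl

theorem restrict_node_of_eq_some {l r l' r' : BTree X} {A : Finset X}
    (hl : l.restrict A = some l') (hr : r.restrict A = some r') :
    (node l r).restrict A = some (node l' r') := by
  simp [restrict, hl, hr]

theorem restrict_singleton {t : BTree X} (ht : t.Phylo) {x : X} (hx : x ∈ t.leaves) :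
    t.restrict {x} = some (leaf x) := by
  induction t with
  | leaf y => simp_all [restrict]
  | node l r ihl ihr =>
    have hd := ht.disjoint
    rw [leaves_node, Finset.mem_union] at hx
    rcases hx with hx | hx
    · rw [restrict_node_of_disjoint_right (Finset.disjoint_singleton_right.2
        (Finset.disjoint_left.1 hd hx)), ihl ht.left hx]
    · rw [restrict_node_of_disjoint_left (Finset.disjoint_singleton_right.2
        (Finset.disjoint_right.1 hd hx)), ihr ht.right hx]

/-! ### Clusters and splits -/

def clusters : BTree X → Set (Finset X)
  | leaf x => {{x}}
  | node l r => insert (node l r).leaves (clusters l ∪ clusters r)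

def splitsOf (U : Finset X) (C : Set (Finset X)) : Set (Finset X) :=
  C ∪ (U \ ·) '' C

theorem mem_clusters_iff {t : BTree X} {S : Finset X} :
    S ∈ t.clusters ↔ ∃ p u, t.subtreeAt p = some u ∧ S = u.leaves := by
  induction t with
  | leaf x =>
    constructor
    · rintro rfl
      exact ⟨[], leaf x, rfl, by simp⟩
    · rintro ⟨_ | _, u, hp, rfl⟩ <;> cases hp
      simp [clusters]
  | node l r ihl ihr =>
    simp only [clusters, Set.mem_insert_iff, Set.mem_union, ihl, ihr]
    constructor
    · rintro (rfl | ⟨p, u, hp, rfl⟩ | ⟨p, u, hp, rfl⟩)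
      · exact ⟨[], _, rfl, rfl⟩
      · exact ⟨false :: p, u, hp, rfl⟩
      · exact ⟨true :: p, u, hp, rfl⟩
    · rintro ⟨_ | ⟨_ | _, p⟩, u, hp, rfl⟩
      · cases hp; exact Or.inl rfl
      · exact Or.inr (Or.inl ⟨p, u, hp, rfl⟩)
      · exact Or.inr (Or.inr ⟨p, u, hp, rfl⟩)

theorem usplits_eq_splitsOf (t : BTree X) : t.usplits = splitsOf t.leaves t.clusters := by
  ext S
  simp only [usplits, splitsOf, mem_clusters_iff, Set.mem_ofPred_eq, Set.mem_union,
    Set.mem_image]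
  constructor
  · rintro ⟨p, u, hp, rfl | rfl⟩
    · exact Or.inl ⟨p, u, hp, rfl⟩
    · exact Or.inr ⟨_, ⟨p, u, hp, rfl⟩, rfl⟩
  · rintro (⟨p, u, hp, rfl⟩ | ⟨_, ⟨p, u, hp, rfl⟩, rfl⟩)
    · exact ⟨p, u, hp, Or.inl rfl⟩
    · exact ⟨p, u, hp, Or.inr rfl⟩

theorem leaves_mem_clusters (t : BTree X) : t.leaves ∈ t.clusters := by
  cases t with
  | leaf x => simp [clusters]
  | node l r => exact Set.mem_insert _ _

theorem subset_leaves_of_mem_clusters {t : BTree X} {S : Finset X} (h : S ∈ t.clusters) :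
    S ⊆ t.leaves := by
  induction t with
  | leaf x => rw [Set.mem_singleton_iff.1 h]; rfl
  | node l r ihl ihr =>
    rcases h with rfl | h | h
    · rfl
    · exact (ihl h).trans (by simp)
    · exact (ihr h).trans (by simp)

theorem clusters_node_comm (l r : BTree X) : (node l r).clusters = (node r l).clusters := by
  simp only [clusters, leaves_node, Finset.union_comm, Set.union_comm]

theorem image_inter_clusters_of_disjoint {t : BTree X} {A : Finset X}
    (h : Disjoint t.leaves A) : (· ∩ A) '' t.clusters ⊆ {∅} := by
  rintro _ ⟨S, hS, rfl⟩
  exact Finset.disjoint_iff_inter_eq_empty.1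
    (Finset.disjoint_of_subset_left (subset_leaves_of_mem_clusters hS) h)

theorem image_inter_clusters_node_of_disjoint_right {l r : BTree X} {A : Finset X}
    (hr : Disjoint r.leaves A) :
    (· ∩ A) '' (node l r).clusters \ {∅} = (· ∩ A) '' l.clusters \ {∅} := by
  have hmem : (node l r).leaves ∩ A ∈ (· ∩ A) '' l.clusters := by
    refine ⟨l.leaves, l.leaves_mem_clusters, ?_⟩
    rw [leaves_node, Finset.union_inter_distrib_right,
      Finset.disjoint_iff_inter_eq_empty.1 hr, Finset.union_empty]
  rw [clusters, Set.image_insert_eq, Set.image_union,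
    Set.insert_eq_of_mem (Set.mem_union_left _ hmem), Set.union_sdiff_distrib,
    Set.sdiff_eq_empty.2 (image_inter_clusters_of_disjoint hr), Set.union_empty]

theorem clusters_restrict {t t' : BTree X} {A : Finset X} (h : t.restrict A = some t') :
    t'.clusters = (· ∩ A) '' t.clusters \ {∅} := by
  induction t generalizing t' with
  | leaf x =>
    by_cases hx : x ∈ A <;> simp only [restrict, hx, if_true, if_false, reduceCtorEq,
      Option.some.injEq] at h
    subst h
    simp [clusters, hx]
  | node l r ihl ihr =>
    rcases hl : l.restrict A with _ | l' <;> rcases hr : r.restrict A with _ | r' <;>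
      simp only [restrict, hl, hr, reduceCtorEq, Option.some.injEq] at h <;> subst h
    · rw [clusters_node_comm, image_inter_clusters_node_of_disjoint_right
        (restrict_eq_none_iff.1 hl), ihr hr]
    · rw [image_inter_clusters_node_of_disjoint_right (restrict_eq_none_iff.1 hr), ihl hl]
    · have hne : (node l r).leaves ∩ A ≠ ∅ := by
        rw [← leaves_of_restrict_eq_some (restrict_node_of_eq_some hl hr)]
        exact (leaves_nonempty _).ne_empty
      rw [clusters, clusters, Set.image_insert_eq, Set.image_union,
        Set.insert_sdiff_of_notMem _ (by simpa using hne), Set.union_sdiff_distrib, ihl hl,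
        ihr hr, leaves_of_restrict_eq_some (restrict_node_of_eq_some hl hr)]

theorem splitsOf_sdiff_empty {U : Finset X} {C : Set (Finset X)} (hU : U ∈ C)
    (hU0 : U.Nonempty) : splitsOf U (C \ {∅}) = splitsOf U C := by
  have hU' : U ∈ C \ {∅} := ⟨hU, hU0.ne_empty⟩
  refine (Set.union_subset_union Set.sdiff_subset (Set.image_mono Set.sdiff_subset)).antisymm ?_
  rintro S (hS | ⟨T, hT, rfl⟩)
  · by_cases h0 : S = ∅
    · exact Or.inr ⟨U, hU', by simp [h0]⟩
    · exact Or.inl ⟨hS, h0⟩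
  · by_cases h0 : T = ∅
    · exact Or.inl (by simpa [h0] using hU')
    · exact Or.inr ⟨T, ⟨hT, h0⟩, rfl⟩

theorem image_inter_splitsOf {U A : Finset X} (hA : A ⊆ U) (C : Set (Finset X)) :
    (· ∩ A) '' splitsOf U C = splitsOf A ((· ∩ A) '' C) := by
  simp only [splitsOf, Set.image_union, Set.image_image]
  congr 1
  refine Set.image_congr fun S _ => ?_
  ext x
  simp only [Finset.mem_inter, Finset.mem_sdiff]
  constructor
  · rintro ⟨⟨-, hS⟩, hA⟩
    exact ⟨hA, fun h => hS h.1⟩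
  · rintro ⟨hA', hS⟩
    exact ⟨⟨hA hA', fun h => hS ⟨h, hA'⟩⟩, hA'⟩

theorem usplits_restrict {t t' : BTree X} {A : Finset X} (hA : A ⊆ t.leaves)
    (h : t.restrict A = some t') : t'.usplits = (· ∩ A) '' t.usplits := by
  have ht' : t'.leaves = A := by rw [leaves_of_restrict_eq_some h, Finset.inter_eq_right.2 hA]
  rw [usplits_eq_splitsOf, usplits_eq_splitsOf, image_inter_splitsOf hA, clusters_restrict h,
    ht', splitsOf_sdiff_empty]
  · exact ⟨t.leaves, t.leaves_mem_clusters, Finset.inter_eq_right.2 hA⟩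
  · exact ht' ▸ t'.leaves_nonempty

/-! ### Caterpillars -/

def combClusters (L : List X) : Set (Finset X) :=
  {S | (∃ x ∈ L, S = {x}) ∨ ∃ N, N <:+ L ∧ N ≠ [] ∧ S = N.toFinset}

/-- `t` is a rooted caterpillar whose leaves, read from the root down, are `L`. -/
def IsSpine (t : BTree X) (L : List X) : Prop :=
  L.Nodup ∧ L.toFinset = t.leaves ∧ t.clusters = combClusters L

theorem singleton_mem_combClusters {L : List X} {x : X} (hx : x ∈ L) :
    {x} ∈ combClusters L :=
  Or.inl ⟨x, hx, rfl⟩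

theorem toFinset_mem_combClusters {L : List X} (hL : L ≠ []) : L.toFinset ∈ combClusters L :=
  Or.inr ⟨L, List.suffix_refl L, hL, rfl⟩

theorem subset_of_mem_combClusters {L : List X} {S : Finset X} (h : S ∈ combClusters L) :
    S ⊆ L.toFinset := by
  rcases h with ⟨x, hx, rfl⟩ | ⟨N, hN, -, rfl⟩
  · simpa using hx
  · exact fun y hy => List.mem_toFinset.2 (hN.subset (List.mem_toFinset.1 hy))

theorem combClusters_singleton (x : X) : combClusters [x] = {{x}} := by
  ext S
  simp only [combClusters, List.mem_singleton, exists_eq_left, List.suffix_cons_iff,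
    List.suffix_nil, Set.mem_ofPred_eq, Set.mem_singleton_iff]
  constructor
  · rintro (h | ⟨N, rfl | rfl, hN, rfl⟩)
    · exact h
    · simp
    · exact absurd rfl hN
  · exact Or.inl

theorem combClusters_cons (x : X) (L : List X) :
    combClusters (x :: L) = insert (x :: L).toFinset (insert {x} (combClusters L)) := by
  ext S
  simp only [combClusters, List.mem_cons, List.suffix_cons_iff, Set.mem_ofPred_eq,
    Set.mem_insert_iff]
  constructor
  · rintro (⟨y, rfl | hy, rfl⟩ | ⟨N, rfl | hN, hN0, rfl⟩)
    · exact Or.inr (Or.inl rfl)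
    · exact Or.inr (Or.inr (Or.inl ⟨y, hy, rfl⟩))
    · exact Or.inl rfl
    · exact Or.inr (Or.inr (Or.inr ⟨N, hN, hN0, rfl⟩))
  · rintro (rfl | rfl | ⟨y, hy, rfl⟩ | ⟨N, hN, hN0, rfl⟩)
    · exact Or.inr ⟨_, Or.inl rfl, List.cons_ne_nil _ _, rfl⟩
    · exact Or.inl ⟨x, Or.inl rfl, rfl⟩
    · exact Or.inl ⟨y, Or.inr hy, rfl⟩
    · exact Or.inr ⟨N, Or.inr hN, hN0, rfl⟩

theorem IsSpine.ne_nil {t : BTree X} {L : List X} (h : IsSpine t L) : L ≠ [] := by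
  rintro rfl
  simpa [← h.2.1] using t.leaves_nonempty

theorem IsSpine.node_comm {l r : BTree X} {L : List X} (h : IsSpine (node l r) L) :
    IsSpine (node r l) L := by
  rw [IsSpine, leaves_node, Finset.union_comm, ← leaves_node, clusters_node_comm]
  exact h

theorem IsSpine.node_leaf_cons {r : BTree X} {L : List X} {x : X} (h : IsSpine r L)
    (hx : x ∉ r.leaves) : IsSpine (node (leaf x) r) (x :: L) := by
  obtain ⟨hnd, hL, hcl⟩ := h
  refine ⟨List.nodup_cons.2 ⟨by rwa [← List.mem_toFinset, hL], hnd⟩, by simp [hL], ?_⟩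
  rw [combClusters_cons, clusters, clusters, hcl, Set.singleton_union]
  simp [hL]

theorem IsSpine.node_leaf_of_mem {r : BTree X} {L : List X} {x : X} (h : IsSpine r L)
    (hx : x ∈ r.leaves) : IsSpine (node (leaf x) r) L := by
  have hLmem := toFinset_mem_combClusters h.ne_nil
  obtain ⟨hnd, hL, hcl⟩ := h
  have hxmem : {x} ∈ combClusters L :=
    singleton_mem_combClusters (by rwa [← List.mem_toFinset, hL])
  refine ⟨hnd, by simp [hL, Finset.insert_eq_of_mem hx], ?_⟩
  rw [clusters, clusters, leaves_node, leaves_leaf, Finset.union_eq_right.2 (by simpa using hx),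
    hcl, ← hL, Set.singleton_union, Set.insert_eq_of_mem (Set.mem_insert_of_mem _ hLmem),
    Set.insert_eq_of_mem hxmem]

theorem IsSpine.exists_node_leaf {r : BTree X} {L : List X} (h : IsSpine r L) (x : X) :
    ∃ L', IsSpine (node (leaf x) r) L' := by
  by_cases hx : x ∈ r.leaves
  · exact ⟨L, h.node_leaf_of_mem hx⟩
  · exact ⟨x :: L, h.node_leaf_cons hx⟩

theorem exists_isSpine {c : BTree X} (hc : c.isCaterpillar) : ∃ L, IsSpine c L := by
  induction c with
  | leaf x => exact ⟨[x], List.nodup_singleton x, by simp, combClusters_singleton x ▸ rfl⟩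
  | node l r ihl ihr =>
    rcases hc with ⟨hl, hr⟩ | ⟨hr, hl⟩
    · cases l with
      | leaf x => exact (ihr hr).elim fun _ h => h.exists_node_leaf x
      | node _ _ => exact hl.elim
    · cases r with
      | leaf x => exact (ihl hl).elim fun _ h => (h.exists_node_leaf x).imp fun _ h => h.node_comm
      | node _ _ => exact hr.elim

theorem combClusters_filter (L : List X) (A : Finset X) :
    (· ∩ A) '' combClusters L \ {∅} = combClusters (L.filter (· ∈ A)) := by
  ext S
  constructor
  · rintro ⟨⟨T, ⟨x, hx, rfl⟩ | ⟨N, hN, -, rfl⟩, rfl⟩, hS⟩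
    · have hxA : x ∈ A := by
        by_contra hxA
        exact hS (by simp [hxA])
      refine Or.inl ⟨x, List.mem_filter.2 ⟨hx, by simpa using hxA⟩, by simpa using hxA⟩
    · dsimp only at hS ⊢
      rw [← List.toFinset_filter_mem] at hS ⊢
      refine Or.inr ⟨_, hN.filter _, ?_, rfl⟩
      rintro h
      exact hS (by simp [h])
  · rintro (⟨x, hx, rfl⟩ | ⟨N', ⟨P, hP⟩, hN', rfl⟩)
    · obtain ⟨hxL, hxA⟩ := List.mem_filter.1 hx
      exact ⟨⟨{x}, singleton_mem_combClusters hxL, by simpa using hxA⟩, by simp⟩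
    · obtain ⟨l₁, N, rfl, -, hN⟩ := List.filter_eq_append_iff.1 hP.symm
      refine ⟨⟨N.toFinset, Or.inr ⟨N, List.suffix_append l₁ N, ?_, rfl⟩, ?_⟩, ?_⟩
      · rintro rfl
        exact hN' hN.symm
      · rw [← hN, List.toFinset_filter_mem]
      · simpa using hN'

theorem splitsOf_subset_splitsOf {U : Finset X} {C D : Set (Finset X)}
    (hD : ∀ S ∈ D, S ⊆ U) (h : C ⊆ splitsOf U D) : splitsOf U C ⊆ splitsOf U D := by
  rintro S (hS | ⟨T, hT, rfl⟩)
  · exact h hS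
  · rcases h hT with hT' | ⟨T', hT', rfl⟩
    · exact Or.inr ⟨T, hT', rfl⟩
    · exact Or.inl (by dsimp only; rwa [sdiff_sdiff_eq_self (hD T' hT')])

theorem combClusters_reverse_subset {M : List X} (hM : M.Nodup) :
    combClusters M.reverse ⊆ splitsOf M.toFinset (combClusters M) := by
  rintro S (⟨x, hx, rfl⟩ | ⟨N, hN, hN0, rfl⟩)
  · exact Or.inl (singleton_mem_combClusters (List.mem_reverse.1 hx))
  · obtain ⟨R, rfl⟩ : N.reverse <+: M := by simpa using List.reverse_prefix.2 hN
    rw [← List.toFinset_reverse (l := N)]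
    rcases eq_or_ne R [] with rfl | hR
    · rw [List.append_nil]
      exact Or.inl (toFinset_mem_combClusters (by simpa using hN0))
    · refine Or.inr ⟨R.toFinset, Or.inr ⟨R, List.suffix_append _ _, hR, rfl⟩, ?_⟩
      dsimp only
      rw [List.toFinset_append, Finset.union_sdiff_cancel_right]
      exact List.disjoint_toFinset_iff_disjoint.2 (List.disjoint_of_nodup_append hM)

theorem splitsOf_combClusters_reverse {M : List X} (hM : M.Nodup) :
    splitsOf M.toFinset (combClusters M.reverse) = splitsOf M.toFinset (combClusters M) := by
  have hsub : ∀ M : List X, ∀ S ∈ combClusters M, S ⊆ M.toFinset :=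
    fun _ _ => subset_of_mem_combClusters
  refine (splitsOf_subset_splitsOf (hsub M) (combClusters_reverse_subset hM)).antisymm ?_
  have h := combClusters_reverse_subset (List.nodup_reverse.2 hM)
  rw [List.reverse_reverse, List.toFinset_reverse] at h
  exact splitsOf_subset_splitsOf (by simpa using hsub M.reverse) h

theorem IsSpine.restrict {c c' : BTree X} {L : List X} {A : Finset X} (h : IsSpine c L)
    (hc : c.restrict A = some c') : IsSpine c' (L.filter (· ∈ A)) :=
  ⟨h.1.filter _, by rw [List.toFinset_filter_mem, h.2.1, leaves_of_restrict_eq_some hc],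
    by rw [clusters_restrict hc, h.2.2, combClusters_filter]⟩

theorem IsSpine.uEq {t s : BTree X} {M N : List X} (ht : IsSpine t M) (hs : IsSpine s N)
    (h : M = N ∨ M = N.reverse) : UEq t s := by
  obtain ⟨-, htM, htc⟩ := ht
  obtain ⟨hnd, hsN, hsc⟩ := hs
  have hleaves : t.leaves = s.leaves := by
    rcases h with rfl | rfl <;> simp [← htM, ← hsN]
  refine ⟨hleaves, ?_⟩
  rw [usplits_eq_splitsOf, usplits_eq_splitsOf, htc, hsc, hleaves, ← hsN]
  rcases h with rfl | rfl
  · rfl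
  · exact splitsOf_combClusters_reverse hnd

theorem UEq.restrict {c t c' t' : BTree X} {A : Finset X} (h : UEq c t) (hA : A ⊆ t.leaves)
    (hc : c.restrict A = some c') (ht : t.restrict A = some t') : UEq c' t' :=
  ⟨by rw [leaves_of_restrict_eq_some hc, leaves_of_restrict_eq_some ht, h.1],
    by rw [usplits_restrict (h.1 ▸ hA) hc, usplits_restrict hA ht, h.2]⟩

/-! ### Combs displayed by a tree -/

/-- `Comb s M`: the restriction of `s` to `M` is a caterpillar with spine order `M`
(`Comb.exists_restrict_isSpine`). -/
inductive Comb : BTree X → List X → Prop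
  | singleton (x : X) : Comb (leaf x) [x]
  | node_left {l r : BTree X} {M : List X} : Comb l M → Comb (node l r) M
  | node_right {l r : BTree X} {M : List X} : Comb r M → Comb (node l r) M
  | cons_left {l r : BTree X} {M : List X} {a : X} :
      a ∈ l.leaves → Comb r M → Comb (node l r) (a :: M)
  | cons_right {l r : BTree X} {M : List X} {a : X} :
      a ∈ r.leaves → Comb l M → Comb (node l r) (a :: M)

theorem Comb.node_comm {l r : BTree X} {M : List X} (h : Comb (node l r) M) :
    Comb (node r l) M := by
  cases h with
  | node_left h => exact h.node_right
  | node_right h => exact h.node_left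
  | cons_left ha h => exact .cons_right ha h
  | cons_right ha h => exact .cons_left ha h

theorem Comb.subset_leaves {s : BTree X} {M : List X} (h : Comb s M) : M.toFinset ⊆ s.leaves := by
  induction h with
  | singleton x => simp
  | node_left _ ih | node_right _ ih => exact ih.trans (by simp)
  | cons_left ha _ ih | cons_right ha _ ih =>
    rw [List.toFinset_cons]
    exact Finset.insert_subset (by simp [ha]) (ih.trans (by simp))

theorem Comb.ne_nil {s : BTree X} {M : List X} (h : Comb s M) : M ≠ [] := by
  induction h with
  | singleton x => simp
  | node_left _ ih | node_right _ ih => exact ih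
  | cons_left | cons_right => simp

theorem restrict_insert_of_notMem {t : BTree X} {A : Finset X} {a : X} (ha : a ∉ t.leaves) :
    t.restrict (insert a A) = t.restrict A :=
  restrict_congr fun x hx => by simp [show x ≠ a by rintro rfl; exact ha hx]

theorem restrict_insert_of_disjoint {t : BTree X} {A : Finset X} (a : X)
    (hA : Disjoint t.leaves A) : t.restrict (insert a A) = t.restrict {a} :=
  restrict_congr fun x hx => by simp [Finset.disjoint_left.1 hA hx]

theorem Comb.exists_restrict_isSpine {s : BTree X} {M : List X} (hs : s.Phylo) (h : Comb s M) :
    ∃ s', s.restrict M.toFinset = some s' ∧ IsSpine s' M := by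
  induction h with
  | singleton x =>
    exact ⟨leaf x, by simp [restrict], List.nodup_singleton x, by simp,
      (combClusters_singleton x).symm⟩
  | @node_left l r M h ih =>
    rw [restrict_node_of_disjoint_right
      (Finset.disjoint_of_subset_right h.subset_leaves hs.disjoint.symm)]
    exact ih hs.left
  | @node_right l r M h ih =>
    rw [restrict_node_of_disjoint_left
      (Finset.disjoint_of_subset_right h.subset_leaves hs.disjoint)]
    exact ih hs.right
  | @cons_left l r M a ha h ih =>
    obtain ⟨u, hu, hspine⟩ := ih hs.right
    have hal : l.restrict (insert a M.toFinset) = some (leaf a) := by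
      rw [restrict_insert_of_disjoint a (Finset.disjoint_of_subset_right h.subset_leaves
        hs.disjoint), restrict_singleton hs.left ha]
    have har : r.restrict (insert a M.toFinset) = some u := by
      rw [restrict_insert_of_notMem (Finset.disjoint_left.1 hs.disjoint ha), hu]
    refine ⟨_, by rw [List.toFinset_cons]; exact restrict_node_of_eq_some hal har,
      hspine.node_leaf_cons ?_⟩
    rw [← hspine.2.1]
    exact fun haM => Finset.disjoint_left.1 hs.disjoint ha (h.subset_leaves haM)
  | @cons_right l r M a ha h ih =>
    obtain ⟨u, hu, hspine⟩ := ih hs.left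
    have har : r.restrict (insert a M.toFinset) = some (leaf a) := by
      rw [restrict_insert_of_disjoint a (Finset.disjoint_of_subset_right h.subset_leaves
        hs.disjoint.symm), restrict_singleton hs.right ha]
    have hal : l.restrict (insert a M.toFinset) = some u := by
      rw [restrict_insert_of_notMem (Finset.disjoint_right.1 hs.disjoint ha), hu]
    refine ⟨_, by rw [List.toFinset_cons]; exact restrict_node_of_eq_some hal har,
      (hspine.node_leaf_cons ?_).node_comm⟩
    rw [← hspine.2.1]
    exact fun haM => Finset.disjoint_right.1 hs.disjoint ha (h.subset_leaves haM)

/-! ### An increasing and a decreasing comb -/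

section Combs

variable {α : Type*} [LinearOrder α] {key : X → α}
  {s l r : BTree X} {B C P Q : Finset X} {w : ℕ}

variable (key) in
def HasCombs (s : BTree X) (B : Finset X) (w : ℕ) : Prop :=
  ∃ I D : List X, Comb s I ∧ Comb s D ∧ (∀ x ∈ I, x ∈ B) ∧ (∀ x ∈ D, x ∈ B) ∧
    I.Pairwise (fun a b => key a < key b) ∧ D.Pairwise (fun a b => key b < key a) ∧
    w ≤ 8 ^ (I.length + D.length)

theorem HasCombs.mono {B' : Finset X} {w' : ℕ} (h : HasCombs key s B w) (hB : B ⊆ B')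
    (hw : w' ≤ w) : HasCombs key s B' w' := by
  obtain ⟨I, D, hI, hD, hIB, hDB, hIs, hDs, hw'⟩ := h
  exact ⟨I, D, hI, hD, fun x hx => hB (hIB x hx), fun x hx => hB (hDB x hx), hIs, hDs,
    hw.trans hw'⟩

theorem HasCombs.node_left (h : HasCombs key l B w) : HasCombs key (node l r) B w := by
  obtain ⟨I, D, hI, hD, h⟩ := h
  exact ⟨I, D, hI.node_left, hD.node_left, h⟩

theorem HasCombs.node_right (h : HasCombs key r B w) : HasCombs key (node l r) B w := by
  obtain ⟨I, D, hI, hD, h⟩ := h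
  exact ⟨I, D, hI.node_right, hD.node_right, h⟩

theorem HasCombs.node_comm (h : HasCombs key (node l r) B w) : HasCombs key (node r l) B w := by
  obtain ⟨I, D, hI, hD, h⟩ := h
  exact ⟨I, D, hI.node_comm, hD.node_comm, h⟩

theorem hasCombs_toDual_comp : HasCombs (OrderDual.toDual ∘ key) s B w ↔ HasCombs key s B w :=
  ⟨fun ⟨I, D, hI, hD, hIB, hDB, hIs, hDs, hw⟩ =>
      ⟨D, I, hD, hI, hDB, hIB, hDs, hIs, by rwa [add_comm]⟩,
    fun ⟨I, D, hI, hD, hIB, hDB, hIs, hDs, hw⟩ =>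
      ⟨D, I, hD, hI, hDB, hIB, hDs, hIs, by rwa [add_comm]⟩⟩

theorem HasCombs.cons_min {a : X} (h : HasCombs key r C w) (ha : a ∈ l.leaves)
    (hlt : ∀ x ∈ C, key a < key x) : HasCombs key (node l r) (insert a C) (8 * w) := by
  obtain ⟨I, D, hI, hD, hIC, hDC, hIs, hDs, hw⟩ := h
  refine ⟨a :: I, D, .cons_left ha hI, hD.node_right, ?_,
    fun x hx => Finset.mem_insert_of_mem (hDC x hx),
    List.pairwise_cons.2 ⟨fun x hx => hlt x (hIC x hx), hIs⟩, hDs, ?_⟩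
  · simpa using fun x hx => Or.inr (hIC x hx)
  · rw [List.length_cons, add_right_comm, pow_succ]
    omega

theorem HasCombs.cons_min_max {a b : X} (h : HasCombs key r C w) (ha : a ∈ l.leaves)
    (hb : b ∈ l.leaves) (hlt : ∀ x ∈ C, key a < key x) (hgt : ∀ x ∈ C, key x < key b) :
    HasCombs key (node l r) (insert a (insert b C)) (64 * w) := by
  obtain ⟨I, D, hI, hD, hIC, hDC, hIs, hDs, hw⟩ := h
  refine ⟨a :: I, b :: D, .cons_left ha hI, .cons_left hb hD, ?_, ?_,
    List.pairwise_cons.2 ⟨fun x hx => hlt x (hIC x hx), hIs⟩,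
    List.pairwise_cons.2 ⟨fun x hx => hgt x (hDC x hx), hDs⟩, ?_⟩
  · simpa using fun x hx => Or.inr (Or.inr (hIC x hx))
  · simpa using fun x hx => Or.inr (Or.inr (hDC x hx))
  · rw [List.length_cons, List.length_cons, show I.length + 1 + (D.length + 1) =
      I.length + D.length + 2 by ring, pow_add]
    omega

variable (key) in
/-- The paper's bound `|I| + |D| ≥ 2 + (2/3) log₂ |B|`, as `64 |B|² ≤ 8 ^ (|I| + |D|)`. -/
def CombBound (t : BTree X) : Prop :=
  ∀ B ⊆ t.leaves, B.Nonempty → Set.InjOn key B → HasCombs key t B (64 * B.card ^ 2)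

theorem combBound_toDual_comp : CombBound (OrderDual.toDual ∘ key) s ↔ CombBound key s :=
  forall₄_congr fun _ _ _ _ => hasCombs_toDual_comp

theorem CombBound.hasCombs_node_of_cons_min {a : X} (hr : CombBound key r)
    (hinj : Set.InjOn key B) (haB : a ∈ B) (hal : a ∈ l.leaves) (hCB : C ⊆ B)
    (hCr : C ⊆ r.leaves) (hC : C.Nonempty) (hlt : ∀ x ∈ C, key a < key x)
    (hcard : B.card ^ 2 ≤ 8 * C.card ^ 2) : HasCombs key (node l r) B (64 * B.card ^ 2) :=
  ((hr C hCr hC (hinj.mono (Finset.coe_subset.2 hCB))).cons_min hal hlt).mono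
    (Finset.insert_subset haB hCB) (by omega)

theorem CombBound.hasCombs_node_of_cons_min_max {a b : X} (hr : CombBound key r)
    (hinj : Set.InjOn key B) (haB : a ∈ B) (hbB : b ∈ B) (hal : a ∈ l.leaves)
    (hbl : b ∈ l.leaves) (hCB : C ⊆ B) (hCr : C ⊆ r.leaves) (hC : C.Nonempty)
    (hlt : ∀ x ∈ C, key a < key x) (hgt : ∀ x ∈ C, key x < key b)
    (hcard : B.card ≤ 8 * C.card) : HasCombs key (node l r) B (64 * B.card ^ 2) :=
  ((hr C hCr hC (hinj.mono (Finset.coe_subset.2 hCB))).cons_min_max hal hbl hlt hgt).mono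
    (Finset.insert_subset haB (Finset.insert_subset hbB hCB)) (by nlinarith)

theorem hasCombs_union_of_eight_mul_card_lt (hr : CombBound key r) (hP : P ⊆ l.leaves)
    (hQ : Q ⊆ r.leaves) (hPQ : Disjoint P Q) (hP0 : P.Nonempty)
    (hinj : Set.InjOn key ↑(P ∪ Q)) (hsmall : 8 * P.card < (P ∪ Q).card) :
    HasCombs key (node l r) (P ∪ Q) (64 * (P ∪ Q).card ^ 2) := by
  obtain ⟨a, ha⟩ := hP0
  have hB := Finset.card_union_of_disjoint hPQ
  have hcard : ∀ C : Finset X, Q.card ≤ 2 * C.card →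
      (P ∪ Q).card ^ 2 ≤ 8 * C.card ^ 2 ∧ C.Nonempty := fun C hC =>
    ⟨by rw [hB] at hsmall ⊢; nlinarith, Finset.card_pos.1 (by omega)⟩
  have hQ_sub : Q.card ≤ (Q.filter (key a < key ·)).card + (Q.filter (key · < key a)).card := by
    refine (Finset.card_le_card fun x hx => ?_).trans (Finset.card_union_le _ _)
    simpa [hx] using
      (hinj.ne (by simp [ha]) (by simp [hx]) (Finset.disjoint_iff_ne.1 hPQ a ha x hx)).lt_or_gt
  have hsub : ∀ p : X → Prop, [DecidablePred p] → Q.filter p ⊆ P ∪ Q := fun _ _ =>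
    (Finset.filter_subset _ _).trans Finset.subset_union_right
  rcases le_total (Q.filter (key · < key a)).card (Q.filter (key a < key ·)).card with hle | hle
  · obtain ⟨hsq, hne⟩ := hcard (Q.filter (key a < key ·)) (by omega)
    exact hr.hasCombs_node_of_cons_min hinj (by simp [ha]) (hP ha) (hsub _)
      ((Finset.filter_subset _ _).trans hQ) hne (fun x hx => (Finset.mem_filter.1 hx).2) hsq
  · obtain ⟨hsq, hne⟩ := hcard (Q.filter (key · < key a)) (by omega)
    exact hasCombs_toDual_comp.1 <| (combBound_toDual_comp.2 hr).hasCombs_node_of_cons_min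
      hinj (by simp [ha]) (hP ha) (hsub _) ((Finset.filter_subset _ _).trans hQ) hne
      (fun x hx => (Finset.mem_filter.1 hx).2) hsq

theorem hasCombs_union_of_card_le_eight_mul (hl : CombBound key l) (hr : CombBound key r)
    (hP : P ⊆ l.leaves) (hQ : Q ⊆ r.leaves) (hPQ : Disjoint P Q) (hP0 : P.Nonempty)
    (hinj : Set.InjOn key ↑(P ∪ Q)) (hle : P.card ≤ Q.card)
    (hlarge : (P ∪ Q).card ≤ 8 * P.card) :
    HasCombs key (node l r) (P ∪ Q) (64 * (P ∪ Q).card ^ 2) := by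
  have hB := Finset.card_union_of_disjoint hPQ
  have hQ0 : Q.Nonempty := Finset.card_pos.1 (hP0.card_pos.trans_le hle)
  have hsq : (P ∪ Q).card ^ 2 ≤ 8 * Q.card ^ 2 := by rw [hB]; nlinarith
  have hne : ∀ {a x}, a ∈ P → x ∈ Q → key a ≠ key x := fun ha hx =>
    hinj.ne (by simp [ha]) (by simp [hx]) (Finset.disjoint_iff_ne.1 hPQ _ ha _ hx)
  have hB0 : (P ∪ Q).Nonempty := hP0.mono Finset.subset_union_left
  obtain ⟨β, hβ, hβmin⟩ := (P ∪ Q).exists_min_image key hB0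
  obtain ⟨τ, hτ, hτmax⟩ := (P ∪ Q).exists_max_image key hB0
  by_cases hβP : β ∈ P
  · exact hr.hasCombs_node_of_cons_min hinj hβ (hP hβP) Finset.subset_union_right hQ hQ0
      (fun x hx => (hβmin x (by simp [hx])).lt_of_ne (hne hβP hx)) hsq
  by_cases hτP : τ ∈ P
  · exact hasCombs_toDual_comp.1 <| (combBound_toDual_comp.2 hr).hasCombs_node_of_cons_min
      hinj hτ (hP hτP) Finset.subset_union_right hQ hQ0
      (fun x hx => (hτmax x (by simp [hx])).lt_of_ne (hne hτP hx).symm) hsq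
  have hβQ : β ∈ Q := (Finset.mem_union.1 hβ).resolve_left hβP
  have hτQ : τ ∈ Q := (Finset.mem_union.1 hτ).resolve_left hτP
  exact (hl.hasCombs_node_of_cons_min_max hinj hβ hτ (hQ hβQ) (hQ hτQ)
    Finset.subset_union_left hP hP0
    (fun x hx => (hβmin x (by simp [hx])).lt_of_ne (hne hx hβQ).symm)
    (fun x hx => (hτmax x (by simp [hx])).lt_of_ne (hne hx hτQ)) hlarge).node_comm

theorem hasCombs_union (hl : CombBound key l) (hr : CombBound key r) (hP : P ⊆ l.leaves)
    (hQ : Q ⊆ r.leaves) (hPQ : Disjoint P Q) (hP0 : P.Nonempty) (hQ0 : Q.Nonempty)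
    (hinj : Set.InjOn key ↑(P ∪ Q)) :
    HasCombs key (node l r) (P ∪ Q) (64 * (P ∪ Q).card ^ 2) := by
  wlog hle : P.card ≤ Q.card generalizing l r P Q
  · rw [Finset.union_comm] at hinj ⊢
    exact (this hr hl hQ hP hPQ.symm hQ0 hP0 hinj (by omega)).node_comm
  by_cases hsmall : 8 * P.card < (P ∪ Q).card
  · exact hasCombs_union_of_eight_mul_card_lt hr hP hQ hPQ hP0 hinj hsmall
  · exact hasCombs_union_of_card_le_eight_mul hl hr hP hQ hPQ hP0 hinj hle (by omega)

theorem CombBound.node (hl : CombBound key l) (hr : CombBound key r) :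
    CombBound key (node l r) := by
  intro B hB hB0 hinj
  rcases (B ∩ l.leaves).eq_empty_or_nonempty with hP0 | hP0
  · refine (hr B (fun x hx => ?_) hB0 hinj).node_right
    have hxl : x ∉ l.leaves := fun hxl => by
      simpa [hP0] using Finset.mem_inter.2 ⟨hx, hxl⟩
    simpa [hxl] using hB hx
  rcases (B \ l.leaves).eq_empty_or_nonempty with hQ0 | hQ0
  · exact (hl B (Finset.sdiff_eq_empty_iff_subset.1 hQ0) hB0 hinj).node_left
  have hQ : B \ l.leaves ⊆ r.leaves := fun x hx => by
    have := hB (Finset.sdiff_subset hx)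
    simp_all
  have h := hasCombs_union hl hr Finset.inter_subset_right hQ (Finset.disjoint_sdiff_inter _ _).symm
    hP0 hQ0 (by rwa [Finset.union_comm, Finset.sdiff_union_inter])
  rwa [Finset.union_comm, Finset.sdiff_union_inter] at h

theorem combBound (key : X → α) : ∀ s : BTree X, CombBound key s
  | leaf x => fun B hB hB0 _ => by
    obtain rfl := hB0.subset_singleton_iff.1 (by simpa using hB)
    exact ⟨[x], [x], .singleton x, .singleton x, by simp, by simp, by simp, by simp, by simp⟩
  | node l r => (combBound key l).node (combBound key r)

theorem HasCombs.exists_monotone_comb (h : HasCombs key s B w) :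
    ∃ M, Comb s M ∧ (M.Pairwise (fun a b => key a < key b) ∨
      M.reverse.Pairwise (fun a b => key a < key b)) ∧ w ≤ 64 ^ M.length := by
  obtain ⟨I, D, hI, hD, -, -, hIs, hDs, hw⟩ := h
  have h64 : ∀ {m k}, m ≤ 2 * k → 8 ^ m ≤ 64 ^ k := fun h =>
    (Nat.pow_le_pow_right (by norm_num) h).trans_eq (by rw [pow_mul]; rfl)
  rcases le_total D.length I.length with hle | hle
  · exact ⟨I, hI, Or.inl hIs, hw.trans (h64 (by omega))⟩
  · exact ⟨D, hD, Or.inr (List.pairwise_reverse.2 hDs), hw.trans (h64 (by omega))⟩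

end Combs

theorem uAgree_of_comb {c t s : BTree X} {L M : List X} (hct : UEq c t) (hc : IsSpine c L)
    (hs : s.Phylo) (hM : Comb s M) (hMt : M.toFinset ⊆ t.leaves)
    (hML : L.filter (· ∈ M.toFinset) = M ∨ L.filter (· ∈ M.toFinset) = M.reverse) :
    UAgree t s M.toFinset := by
  obtain ⟨s', hs', hspine⟩ := hM.exists_restrict_isSpine hs
  obtain ⟨x, hx⟩ : M.toFinset.Nonempty := List.toFinset_nonempty_iff _ |>.2 hM.ne_nil
  have hmeet : ∀ u : BTree X, M.toFinset ⊆ u.leaves → ¬ Disjoint u.leaves M.toFinset :=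
    fun _ hu hd => Finset.disjoint_right.1 hd hx (hu hx)
  obtain ⟨t', ht'⟩ := exists_restrict_eq_some (hmeet t hMt)
  obtain ⟨c', hc'⟩ := exists_restrict_eq_some (hmeet c (hct.1 ▸ hMt))
  have hct' := hct.restrict hMt hc' ht'
  have hcs' := (hc.restrict hc').uEq hspine hML
  exact ⟨t', s', ht', hs', hct'.1.symm.trans hcs'.1, hct'.2.symm.trans hcs'.2⟩

end BTree

theorem one_div_three_mul_logb_two_le {n m : ℕ} (h : 64 * n ^ 2 ≤ 64 ^ m) :
    1 / 3 * Real.logb 2 n ≤ m := by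
  have hn : n ≤ 2 ^ (3 * m) := by
    rw [pow_mul, ← Nat.pow_le_pow_iff_left two_ne_zero, ← pow_mul, mul_comm, pow_mul]
    norm_num
    omega
  rcases n.eq_zero_or_pos with rfl | hn0
  · simp
  have := Real.logb_le_logb_of_le one_lt_two (by exact_mod_cast hn0)
    (show (n : ℝ) ≤ 2 ^ (3 * m) by exact_mod_cast hn)
  rw [Real.logb_pow, Real.logb_self_eq_one one_lt_two] at this
  push_cast at this
  linarith

open BTree

theorem caterpillar_agreement_lower_bound_general (n : ℕ)
    (t s : BTree (Fin n))
    (hs : s.Phylo)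
    (hlt : t.leaves = Finset.univ) (hls : s.leaves = Finset.univ)
    (hcat : UCaterpillar t) :
    ∃ A : Finset (Fin n), (1 / 3) * Real.logb 2 n ≤ (A.card : ℝ) ∧
      UAgree t s A := by
  obtain ⟨c, hc, hct⟩ := hcat
  obtain ⟨L, hL⟩ := exists_isSpine hc
  have hLmem : ∀ x, x ∈ L := fun x => List.mem_toFinset.1 (by simp [hL.2.1, hct.1, hlt])
  obtain ⟨M, hM, hsorted, hw⟩ := (combBound (L.idxOf ·) s s.leaves subset_rfl s.leaves_nonempty
    fun x _ y _ h => (List.idxOf_inj (hLmem x)).1 h).exists_monotone_comb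
  have hfilter {N : List (Fin n)} := List.filter_mem_toFinset_eq_of_pairwise_idxOf (M := N) hL.1
    fun x _ => hLmem x
  have hML : L.filter (· ∈ M.toFinset) = M ∨ L.filter (· ∈ M.toFinset) = M.reverse :=
    hsorted.imp hfilter fun h => List.toFinset_reverse (l := M) ▸ hfilter h
  have hMnd : M.Nodup := by
    rcases hML with h | h
    · exact h ▸ hL.1.filter _
    · exact List.nodup_reverse.1 (h ▸ hL.1.filter _)
  refine ⟨M.toFinset, ?_, uAgree_of_comb hct hL hs hM (by simp [hlt]) hML⟩
  rw [List.toFinset_card_of_nodup hMnd]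
  exact one_div_three_mul_logb_two_le (by simpa [hls] using hw)

/-- Martin–Thatte (Proposition 1): any two unrooted binary phylogenetic trees on
the same leaf set of size `n`, one of which is a caterpillar, have an agreement
subtree of size at least `(1/3)·log₂ n`. -/
theorem caterpillar_agreement_lower_bound (n : ℕ)
    (t s : BTree (Fin n))
    (ht : t.Phylo) (hs : s.Phylo)
    (hlt : t.leaves = Finset.univ) (hls : s.leaves = Finset.univ)
    (hcat : UCaterpillar t) :
    ∃ A : Finset (Fin n), (1 / 3) * Real.logb 2 n ≤ (A.card : ℝ) ∧
      UAgree t s A :=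
  caterpillar_agreement_lower_bound_general n t s hs hlt hls hcat
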